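/- Under the hypotheses of the previous contraction setup, the map $D : B \to B$ on $B = \{w \in C([0,T_0];\mathbb{R}^3) : \|w - z_0\|_\infty \le h_0/2\}$ defined by $D(w)(t) = z_0 + \frac{1}{m}\int_0^t \int_{S+w(\tau)} u(x,\tau)\,dx\,d\tau$ is a contraction with Lipschitz constant $\frac{C\sqrt{T_0}}{m}\|u\|_{L^2(0,T;L^\infty)} < 1$, i.e. $\|D(w^{(1)}) - D(w^{(2)})\|_\infty \le \frac{C\sqrt{T_0}}{m}\|u\|_{L^2(0,T;L^\infty)} \|w^{(1)} - w^{(2)}\|_\infty$ for all $w^{(1)}, w^{(2)} \in B$. -/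

import Mathlib

/-!
At a fixed time `τ` the integrals of `u(·, τ)` over `S + w₁(τ)` and `S + w₂(τ)` differ only on
the symmetric difference of these sets, a translate of `S ∆ (S + (w₂ - w₁)(τ))`, whose measure the
shift hypothesis bounds by `C ‖w₁(τ) - w₂(τ)‖`; so the integrands differ by at most `C M g(τ)`.
Integrating over `[0, t]` and using Cauchy–Schwarz, `∫₀ᵗ g ≤ √T₀ ‖g‖_{L²(0,T)}`, gives the
Lipschitz constant, which is `< 1` exactly because `T₀ < m² / (C² ‖g‖²_{L²(0,T)})`.
Two points of the ball `B` may be `h₀` apart, just outside the range `‖h‖ < h₀` of the shift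
hypothesis; splitting a shift into two half shifts doubles that range.
-/

open MeasureTheory Set
open scoped symmDiff

section Translate

variable {G : Type*} [AddGroup G] [MeasurableSpace G] [MeasurableAdd G]
  (μ : Measure G) [μ.IsAddRightInvariant]

theorem measure_image_add_right (a : G) (s : Set G) : μ ((· + a) '' s) = μ s := by
  rw [image_add_right, measure_preimage_add_right]

theorem measure_image_add_right_symmDiff (s : Set G) (a b : G) :
    μ (((· + a) '' s) ∆ ((· + b) '' s)) = μ (s ∆ ((· + (b - a)) '' s)) := by
  have : (· + b) '' s = (· + a) '' ((· + (b - a)) '' s) := by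
    rw [image_image]
    simp only [add_assoc, sub_add_cancel]
  rw [this, ← image_symmDiff (add_left_injective a), measure_image_add_right]

end Translate

section ShiftLipschitz

variable {E : Type*} [NormedAddCommGroup E] [MeasurableSpace E]

def ShiftLipschitz (μ : Measure E) (S : Set E) (C h₀ : ℝ) : Prop :=
  ∀ h : E, ‖h‖ < h₀ → μ (S ∆ ((· + h) '' S)) ≤ ENNReal.ofReal (C * ‖h‖)

variable [MeasurableAdd E] {μ : Measure E} [μ.IsAddRightInvariant] {S : Set E} {C h₀ : ℝ}

theorem ShiftLipschitz.measure_image_add_right_symmDiff_le (hS : ShiftLipschitz μ S C h₀)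
    {a b : E} (hab : ‖a - b‖ < h₀) :
    μ (((· + a) '' S) ∆ ((· + b) '' S)) ≤ ENNReal.ofReal (C * ‖a - b‖) := by
  rw [measure_image_add_right_symmDiff, ← norm_neg, neg_sub]
  exact hS _ (by rwa [← norm_neg, neg_sub])

theorem ShiftLipschitz.two_mul [NormedSpace ℝ E] (hS : ShiftLipschitz μ S C h₀) (hC : 0 ≤ C) :
    ShiftLipschitz μ S C (2 * h₀) := by
  intro h hh
  have hhalf : ‖(2 : ℝ)⁻¹ • h‖ = ‖h‖ / 2 := by
    rw [norm_smul, norm_inv, Real.norm_two, inv_mul_eq_div]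
  have hhalf_lt : ‖(2 : ℝ)⁻¹ • h‖ < h₀ := by rw [hhalf]; linarith
  calc μ (S ∆ ((· + h) '' S))
      ≤ μ (S ∆ ((· + (2 : ℝ)⁻¹ • h) '' S)) +
          μ (((· + (2 : ℝ)⁻¹ • h) '' S) ∆ ((· + h) '' S)) := measure_symmDiff_le _ _ _
    _ = μ (S ∆ ((· + (2 : ℝ)⁻¹ • h) '' S)) + μ (S ∆ ((· + (2 : ℝ)⁻¹ • h) '' S)) := by
      rw [measure_image_add_right_symmDiff, show h - (2 : ℝ)⁻¹ • h = (2 : ℝ)⁻¹ • h by module]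
    _ ≤ ENNReal.ofReal (C * (‖h‖ / 2)) + ENNReal.ofReal (C * (‖h‖ / 2)) := by
      rw [← hhalf]; exact add_le_add (hS _ hhalf_lt) (hS _ hhalf_lt)
    _ = ENNReal.ofReal (C * ‖h‖) := by
      rw [← ENNReal.ofReal_add (by positivity) (by positivity)]
      ring_nf

end ShiftLipschitz

section SetIntegral

variable {α F : Type*} [MeasurableSpace α] {μ : Measure α}
  [NormedAddCommGroup F] [NormedSpace ℝ F] {f : α → F}

theorem norm_setIntegral_sub_setIntegral_le {s t : Set α} {c : ℝ} (hs : MeasurableSet s)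
    (ht : MeasurableSet t) (hfs : IntegrableOn f s μ) (hft : IntegrableOn f t μ)
    (hst : μ (s ∆ t) ≠ ⊤) (hf : ∀ x ∈ s ∆ t, ‖f x‖ ≤ c) :
    ‖∫ x in s, f x ∂μ - ∫ x in t, f x ∂μ‖ ≤ c * μ.real (s ∆ t) := by
  have hst' : μ (s \ t) ≠ ⊤ := measure_ne_top_of_subset subset_union_left hst
  have hts' : μ (t \ s) ≠ ⊤ := measure_ne_top_of_subset subset_union_right hst
  have hsplit : ∫ x in s, f x ∂μ - ∫ x in t, f x ∂μ =
      ∫ x in s \ t, f x ∂μ - ∫ x in t \ s, f x ∂μ := by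
    rw [← integral_inter_add_sdiff ht hfs, ← integral_inter_add_sdiff hs hft, inter_comm]
    abel
  calc ‖∫ x in s, f x ∂μ - ∫ x in t, f x ∂μ‖
      ≤ ‖∫ x in s \ t, f x ∂μ‖ + ‖∫ x in t \ s, f x ∂μ‖ := hsplit ▸ norm_sub_le _ _
    _ ≤ c * μ.real (s \ t) + c * μ.real (t \ s) := by
      gcongr
      · exact norm_setIntegral_le_of_norm_le_const hst'.lt_top fun x hx => hf x (Or.inl hx)
      · exact norm_setIntegral_le_of_norm_le_const hts'.lt_top fun x hx => hf x (Or.inr hx)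
    _ = c * μ.real (s ∆ t) := by
      rw [← mul_add, Set.symmDiff_def, measureReal_union disjoint_sdiff_sdiff (ht.diff hs)]

end SetIntegral

section TranslatedIntegral

variable {E F : Type*} [NormedAddCommGroup E] [MeasurableSpace E] [MeasurableAdd E]
  {μ : Measure E} [μ.IsAddRightInvariant] [NormedAddCommGroup F] [NormedSpace ℝ F]

theorem setIntegral_image_add_right (f : E → F) (s : Set E) (a : E) :
    ∫ x in (· + a) '' s, f x ∂μ = ∫ x in s, f (x + a) ∂μ :=
  (measurePreserving_add_right μ a).setIntegral_image_emb
    (MeasurableEquiv.addRight a).measurableEmbedding f s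

theorem MeasurableSet.image_add_right {s : Set E} (hs : MeasurableSet s) (a : E) :
    MeasurableSet ((· + a) '' s) :=
  (MeasurableEquiv.addRight a).measurableEmbedding.measurableSet_image.mpr hs

theorem ShiftLipschitz.norm_setIntegral_image_add_right_sub_le {S : Set E} {C h₀ c : ℝ}
    (hS : ShiftLipschitz μ S C h₀) (hSm : MeasurableSet S) (hSfin : μ S ≠ ⊤) (hC : 0 ≤ C)
    {f : E → F} (hf : AEStronglyMeasurable f μ) (hfc : ∀ x, ‖f x‖ ≤ c) {a b : E}
    (hab : ‖a - b‖ < h₀) :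
    ‖∫ x in (· + a) '' S, f x ∂μ - ∫ x in (· + b) '' S, f x ∂μ‖ ≤ C * ‖a - b‖ * c := by
  have hc : 0 ≤ c := (norm_nonneg _).trans (hfc 0)
  have hfin : ∀ a : E, μ ((· + a) '' S) ≠ ⊤ := fun a => by
    rwa [measure_image_add_right]
  have hint : ∀ a : E, IntegrableOn f ((· + a) '' S) μ := fun a =>
    .of_bound (hfin a).lt_top hf.restrict c (ae_of_all _ hfc)
  have hsymm : μ.real (((· + a) '' S) ∆ ((· + b) '' S)) ≤ C * ‖a - b‖ :=
    ENNReal.toReal_le_of_le_ofReal (by positivity)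
      (hS.measure_image_add_right_symmDiff_le hab)
  calc _ ≤ c * μ.real (((· + a) '' S) ∆ ((· + b) '' S)) :=
        norm_setIntegral_sub_setIntegral_le (hSm.image_add_right a) (hSm.image_add_right b)
          (hint a) (hint b) (measure_symmDiff_ne_top (hfin a) (hfin b)) fun x _ => hfc x
    _ ≤ c * (C * ‖a - b‖) := by gcongr
    _ = C * ‖a - b‖ * c := mul_comm _ _

end TranslatedIntegral

section TimeIntegral

variable {α E F : Type*} [MeasurableSpace α] {ν : Measure α}
  [NormedAddCommGroup E] [MeasurableSpace E] [MeasurableAdd₂ E]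
  {μ : Measure E} [μ.IsAddRightInvariant] [SFinite μ] [NormedAddCommGroup F] [NormedSpace ℝ F]
  {u : E → α → F} {g : α → ℝ} {S : Set E}

theorem integrable_setIntegral_image_add_right (hu : StronglyMeasurable (Function.uncurry u))
    (hSfin : μ S ≠ ⊤) (hg : Integrable g ν) (hug : ∀ᵐ τ ∂ν, ∀ x, ‖u x τ‖ ≤ g τ) {w : α → E}
    (hw : AEMeasurable w ν) :
    Integrable (fun τ => ∫ x in (· + w τ) '' S, u x τ ∂μ) ν := by
  simp_rw [setIntegral_image_add_right]
  have hshift : AEMeasurable (fun p : α × E => (p.2 + w p.1, p.1)) (ν.prod (μ.restrict S)) :=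
    (measurable_snd.aemeasurable.add
      (hw.comp_quasiMeasurePreserving Measure.quasiMeasurePreserving_fst)).prodMk
      measurable_fst.aemeasurable
  refine (hg.const_mul (μ.real S)).mono'
    (hu.aestronglyMeasurable.comp_aemeasurable hshift).integral_prod_right' ?_
  filter_upwards [hug] with τ hτ
  rw [mul_comm]
  exact norm_setIntegral_le_of_norm_le_const hSfin.lt_top fun x _ => hτ _

theorem ShiftLipschitz.norm_integral_setIntegral_image_add_right_sub_le {C h₀ M : ℝ}
    (hS : ShiftLipschitz μ S C h₀) (hSm : MeasurableSet S) (hSfin : μ S ≠ ⊤) (hC : 0 ≤ C)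
    (hu : StronglyMeasurable (Function.uncurry u)) (hg : Integrable g ν)
    (hug : ∀ᵐ τ ∂ν, ∀ x, ‖u x τ‖ ≤ g τ) {w₁ w₂ : α → E} (hw₁ : AEMeasurable w₁ ν)
    (hw₂ : AEMeasurable w₂ ν) (hw : ∀ᵐ τ ∂ν, ‖w₁ τ - w₂ τ‖ < h₀)
    (hM : ∀ᵐ τ ∂ν, ‖w₁ τ - w₂ τ‖ ≤ M) :
    ‖∫ τ, (∫ x in (· + w₁ τ) '' S, u x τ ∂μ) ∂ν - ∫ τ, (∫ x in (· + w₂ τ) '' S, u x τ ∂μ) ∂ν‖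
      ≤ C * M * ∫ τ, g τ ∂ν := by
  rw [← integral_sub (integrable_setIntegral_image_add_right hu hSfin hg hug hw₁)
    (integrable_setIntegral_image_add_right hu hSfin hg hug hw₂), ← integral_const_mul]
  refine norm_integral_le_of_norm_le (hg.const_mul _) ?_
  filter_upwards [hug, hw, hM] with τ hτ hτw hτM
  calc _ ≤ C * ‖w₁ τ - w₂ τ‖ * g τ :=
        hS.norm_setIntegral_image_add_right_sub_le hSm hSfin hC
          (hu.comp_measurable (measurable_id.prodMk measurable_const)).aestronglyMeasurable hτ hτw
    _ ≤ C * M * g τ := by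
      have : 0 ≤ g τ := (norm_nonneg _).trans (hτ 0)
      gcongr

end TimeIntegral

theorem integral_le_sqrt_measureReal_univ_mul_sqrt_integral_sq {α : Type*} [MeasurableSpace α]
    {ν : Measure α} [IsFiniteMeasure ν] {g : α → ℝ} (hg : MemLp g 2 ν) :
    ∫ τ, g τ ∂ν ≤ √(ν.real univ) * √(∫ τ, g τ ^ 2 ∂ν) := by
  have holder := integral_mul_norm_le_Lp_mul_Lq (μ := ν) Real.HolderConjugate.two_two
    (f := fun _ => (1 : ℝ)) (by simpa using memLp_const (1 : ℝ)) (by simpa using hg)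
  simp only [norm_one, one_mul, one_pow, integral_const, smul_eq_mul, mul_one,
    Real.rpow_two, Real.norm_eq_abs, sq_abs, ← Real.sqrt_eq_rpow] at holder
  exact (le_abs_self _).trans (abs_integral_le_integral_abs.trans holder)

theorem mul_sqrt_div_mul_sqrt_lt_one {C T₀ m I : ℝ} (hm : 0 < m) (hT₀ : 0 ≤ T₀) (hI : 0 ≤ I)
    (hT₀_lt : T₀ < m ^ 2 / (C ^ 2 * I)) : C * √T₀ / m * √I < 1 := by
  have hCI : 0 < C ^ 2 * I := by
    by_contra! h
    exact (hT₀.trans_lt hT₀_lt).not_ge (div_nonpos_of_nonneg_of_nonpos (sq_nonneg m) h)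
  have hsq : (C * √T₀ / m * √I) ^ 2 < 1 ^ 2 := by
    rw [mul_pow, div_pow, mul_pow, Real.sq_sqrt hT₀, Real.sq_sqrt hI, one_pow, div_mul_eq_mul_div,
      div_lt_one (by positivity)]
    rw [lt_div_iff₀ hCI] at hT₀_lt
    linarith
  exact lt_of_pow_lt_pow_left₀ 2 zero_le_one hsq

theorem fixed_point_map_is_contraction_general
    (S : Set (EuclideanSpace ℝ (Fin 3)))
    (hSm : MeasurableSet S) (hm : 0 < (volume S).toReal)
    (C h0 T T0 : ℝ) (hC : 0 < C) (hh0 : 0 < h0) (hT0 : 0 < T0) (hT0T : T0 ≤ T)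
    (hshift : ∀ h : EuclideanSpace ℝ (Fin 3), ‖h‖ < h0 →
      volume (symmDiff S ((fun x => x + h) '' S)) ≤ ENNReal.ofReal (C * ‖h‖))
    (u : EuclideanSpace ℝ (Fin 3) → ℝ → EuclideanSpace ℝ (Fin 3))
    (hu : Measurable (Function.uncurry u))
    (g : ℝ → ℝ) (hgm : Measurable g)
    (hg : ∀ t ∈ Set.Icc (0:ℝ) T, ∀ x, ‖u x t‖ ≤ g t)
    (hgL2 : IntegrableOn (fun t => (g t) ^ 2) (Set.Icc (0:ℝ) T))
    -- `T₀ < m²/(C²‖u‖²_{L²(0,T;L^∞)})`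
    (hT0small : T0 < (volume S).toReal ^ 2 /
      (C ^ 2 * ∫ τ in Set.Icc (0:ℝ) T, (g τ) ^ 2))
    (z0 : EuclideanSpace ℝ (Fin 3)) :
    C * Real.sqrt T0 / (volume S).toReal *
        Real.sqrt (∫ τ in Set.Icc (0:ℝ) T, (g τ) ^ 2) < 1 ∧
      ∀ w1 w2 : ℝ → EuclideanSpace ℝ (Fin 3),
        ContinuousOn w1 (Set.Icc 0 T0) → ContinuousOn w2 (Set.Icc 0 T0) →
        (∀ t ∈ Set.Icc (0:ℝ) T0, ‖w1 t - z0‖ ≤ h0 / 2) →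
        (∀ t ∈ Set.Icc (0:ℝ) T0, ‖w2 t - z0‖ ≤ h0 / 2) →
        ∀ M : ℝ, (∀ τ ∈ Set.Icc (0:ℝ) T0, ‖w1 τ - w2 τ‖ ≤ M) →
        ∀ t ∈ Set.Icc (0:ℝ) T0,
          ‖(z0 + ((volume S).toReal)⁻¹ •
              ∫ τ in Set.Icc (0:ℝ) t, ∫ x in (fun y => y + w1 τ) '' S, u x τ) -
            (z0 + ((volume S).toReal)⁻¹ •
              ∫ τ in Set.Icc (0:ℝ) t, ∫ x in (fun y => y + w2 τ) '' S, u x τ)‖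
          ≤ C * Real.sqrt T0 / (volume S).toReal *
              Real.sqrt (∫ τ in Set.Icc (0:ℝ) T, (g τ) ^ 2) * M := by
  have hI : 0 ≤ ∫ τ in Icc 0 T, g τ ^ 2 := integral_nonneg fun τ => sq_nonneg _
  refine ⟨mul_sqrt_div_mul_sqrt_lt_one hm hT0.le hI hT0small, ?_⟩
  rintro w1 w2 hw1 hw2 hb1 hb2 M hM t ⟨ht0, htT0⟩
  have hsubT0 : Icc 0 t ⊆ Icc 0 T0 := Icc_subset_Icc_right htT0
  have hsubT : Icc 0 t ⊆ Icc 0 T := hsubT0.trans (Icc_subset_Icc_right hT0T)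
  have hgL2t : MemLp g 2 (volume.restrict (Icc 0 t)) :=
    (memLp_two_iff_integrable_sq hgm.aestronglyMeasurable).mpr (hgL2.mono_set hsubT)
  have hclose : ∀ τ ∈ Icc 0 T0, ‖w1 τ - w2 τ‖ < 2 * h0 := fun τ hτ => by
    linarith [norm_sub_le_norm_sub_add_norm_sub (w1 τ) z0 (w2 τ), norm_sub_rev z0 (w2 τ),
      hb1 τ hτ, hb2 τ hτ]
  have hS : ShiftLipschitz volume S C (2 * h0) := ShiftLipschitz.two_mul hshift hC.le
  have hdiff := hS.norm_integral_setIntegral_image_add_right_sub_le hSm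
    (ENNReal.toReal_pos_iff.mp hm).2.ne hC.le hu.stronglyMeasurable (hgL2t.integrable one_le_two)
    (ae_restrict_of_forall_mem measurableSet_Icc fun τ hτ => hg τ (hsubT hτ))
    ((hw1.mono hsubT0).aemeasurable measurableSet_Icc)
    ((hw2.mono hsubT0).aemeasurable measurableSet_Icc)
    (ae_restrict_of_forall_mem measurableSet_Icc fun τ hτ => hclose τ (hsubT0 hτ))
    (ae_restrict_of_forall_mem measurableSet_Icc fun τ hτ => hM τ (hsubT0 hτ))
  have hCS : ∫ τ in Icc 0 t, g τ ≤ √T0 * √(∫ τ in Icc 0 T, g τ ^ 2) :=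
    calc _ ≤ √t * √(∫ τ in Icc 0 t, g τ ^ 2) := by
          simpa [ht0] using integral_le_sqrt_measureReal_univ_mul_sqrt_integral_sq hgL2t
      _ ≤ _ := by
          gcongr
          exact ae_of_all _ fun τ => sq_nonneg _
  have hM0 : 0 ≤ M := (norm_nonneg _).trans (hM 0 ⟨le_rfl, hT0.le⟩)
  rw [add_sub_add_left_eq_sub, ← smul_sub, norm_smul, Real.norm_of_nonneg (inv_nonneg.mpr hm.le)]
  calc _ ≤ (volume S).toReal⁻¹ * (C * M * ∫ τ in Icc 0 t, g τ) := by gcongr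
    _ ≤ (volume S).toReal⁻¹ * (C * M * (√T0 * √(∫ τ in Icc 0 T, g τ ^ 2))) := by gcongr
    _ = _ := by ring

/-- The fixed-point map `D(w)(t) = z₀ + (1/m)∫₀ᵗ∫_{S+w(τ)} u dx dτ` of Lemma 3.1 is a
contraction on the ball `B = {w : ‖w - z₀‖_∞ ≤ h₀/2}` with Lipschitz constant
`C√T₀‖u‖_{L²(0,T;L^∞)}/m < 1`. -/
theorem fixed_point_map_is_contraction
    (S : Set (EuclideanSpace ℝ (Fin 3))) (hSb : Bornology.IsBounded S)
    (hSm : MeasurableSet S) (hm : 0 < (volume S).toReal)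
    (C h0 T T0 : ℝ) (hC : 0 < C) (hh0 : 0 < h0) (hT0 : 0 < T0) (hT0T : T0 ≤ T)
    (hshift : ∀ h : EuclideanSpace ℝ (Fin 3), ‖h‖ < h0 →
      volume (symmDiff S ((fun x => x + h) '' S)) ≤ ENNReal.ofReal (C * ‖h‖))
    (u : EuclideanSpace ℝ (Fin 3) → ℝ → EuclideanSpace ℝ (Fin 3))
    (hu : Measurable (Function.uncurry u))
    (g : ℝ → ℝ) (hgm : Measurable g)
    (hg : ∀ t ∈ Set.Icc (0:ℝ) T, ∀ x, ‖u x t‖ ≤ g t)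
    (hgL2 : IntegrableOn (fun t => (g t) ^ 2) (Set.Icc (0:ℝ) T))
    (huL2 : IntegrableOn
      (fun p : (EuclideanSpace ℝ (Fin 3)) × ℝ => ‖u p.1 p.2‖ ^ 2)
      (Set.univ ×ˢ Set.Icc (0:ℝ) T))
    -- `T₀ < m²/(C²‖u‖²_{L²(0,T;L^∞)})`
    (hT0small : T0 < (volume S).toReal ^ 2 /
      (C ^ 2 * ∫ τ in Set.Icc (0:ℝ) T, (g τ) ^ 2))
    -- `D` maps the ball `B` into itself: `√T₀ ‖u‖_{L²(Q_T)} / √m < h₀/2`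
    (hself : Real.sqrt T0 *
        Real.sqrt (∫ τ in Set.Icc (0:ℝ) T, ∫ x, ‖u x τ‖ ^ 2) /
        Real.sqrt ((volume S).toReal) < h0 / 2)
    (z0 : EuclideanSpace ℝ (Fin 3)) :
    C * Real.sqrt T0 / (volume S).toReal *
        Real.sqrt (∫ τ in Set.Icc (0:ℝ) T, (g τ) ^ 2) < 1 ∧
      ∀ w1 w2 : ℝ → EuclideanSpace ℝ (Fin 3),
        ContinuousOn w1 (Set.Icc 0 T0) → ContinuousOn w2 (Set.Icc 0 T0) →
        (∀ t ∈ Set.Icc (0:ℝ) T0, ‖w1 t - z0‖ ≤ h0 / 2) →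
        (∀ t ∈ Set.Icc (0:ℝ) T0, ‖w2 t - z0‖ ≤ h0 / 2) →
        ∀ M : ℝ, (∀ τ ∈ Set.Icc (0:ℝ) T0, ‖w1 τ - w2 τ‖ ≤ M) →
        ∀ t ∈ Set.Icc (0:ℝ) T0,
          ‖(z0 + ((volume S).toReal)⁻¹ •
              ∫ τ in Set.Icc (0:ℝ) t, ∫ x in (fun y => y + w1 τ) '' S, u x τ) -
            (z0 + ((volume S).toReal)⁻¹ •
              ∫ τ in Set.Icc (0:ℝ) t, ∫ x in (fun y => y + w2 τ) '' S, u x τ)‖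
          ≤ C * Real.sqrt T0 / (volume S).toReal *
              Real.sqrt (∫ τ in Set.Icc (0:ℝ) T, (g τ) ^ 2) * M :=
  fixed_point_map_is_contraction_general S hSm hm C h0 T T0 hC hh0 hT0 hT0T hshift u hu g hgm hg
    hgL2 hT0small z0
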